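/- arXiv:2106.09194 — 3 statements merged into one kernel-verified Lean document; each statement's English description precedes it below -/
import Mathlib

section
/- For ε > 0 and a real number n > 0 with n ≠ 4, the one-loop RG flow of the O(n) model with cubic anisotropy has exactly four fixed points: the set of common zeros of β_u and β_v equals {(0, 0), (ε/(8(n+8)), 0), (0, ε/72), (ε/(24n), (n−4)ε/(72n))}, i.e. the Gaussian, Wilson–Fisher, Ising and Cubic fixed points, and these four points are pairwise distinct. -/
/-- For `ε > 0` and `n > 0` with `n ≠ 4`, the one-loop RG flow of the `O(n)` model
with cubic anisotropy has exactly four fixed points: the Gaussian, Wilson–Fisher,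
Ising and Cubic fixed points, and these are pairwise distinct. -/
theorem On_model_cubic_anisotropy_fixed_points
    (ε n : ℝ) (hε : 0 < ε) (hn : 0 < n) (hn4 : n ≠ 4) :
    ({p : ℝ × ℝ |
        ε * p.1 - 8 * (n + 8) * p.1 ^ 2 - 48 * p.1 * p.2 = 0 ∧
        ε * p.2 - 96 * p.1 * p.2 - 72 * p.2 ^ 2 = 0} =
      {(0, 0), (ε / (8 * (n + 8)), 0), (0, ε / 72),
        (ε / (24 * n), (n - 4) * ε / (72 * n))}) ∧
    List.Pairwise (· ≠ ·)
      [((0 : ℝ), (0 : ℝ)), (ε / (8 * (n + 8)), 0), (0, ε / 72),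
        (ε / (24 * n), (n - 4) * ε / (72 * n))] := by
  have hn8 : (8 : ℝ) * (n + 8) ≠ 0 := by positivity
  have h24n : (24 : ℝ) * n ≠ 0 := by positivity
  have h72n : (72 : ℝ) * n ≠ 0 := by positivity
  have hεne : ε ≠ 0 := ne_of_gt hε
  have hnne : n ≠ 0 := ne_of_gt hn
  constructor
  · ext ⟨u, v⟩
    simp only [Set.mem_setOf_eq, Set.mem_insert_iff, Set.mem_singleton_iff,
      Prod.mk.injEq]
    constructor
    · rintro ⟨h1, h2⟩
      have h1' : u * (ε - 8 * (n + 8) * u - 48 * v) = 0 := by ring_nf; linarith [h1]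
      have h2' : v * (ε - 96 * u - 72 * v) = 0 := by ring_nf; linarith [h2]
      rcases mul_eq_zero.mp h1' with hu | hu <;>
        rcases mul_eq_zero.mp h2' with hv | hv
      · exact Or.inl ⟨hu, hv⟩
      · refine Or.inr (Or.inr (Or.inl ⟨hu, ?_⟩))
        field_simp
        nlinarith [hv, hu]
      · refine Or.inr (Or.inl ⟨?_, hv⟩)
        field_simp
        nlinarith [hu, hv]
      · refine Or.inr (Or.inr (Or.inr ⟨?_, ?_⟩))
        · field_simp
          nlinarith [hu, hv]
        · field_simp
          nlinarith [hu, hv]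
    · rintro (⟨hu, hv⟩ | ⟨hu, hv⟩ | ⟨hu, hv⟩ | ⟨hu, hv⟩) <;> subst hu <;> subst hv <;>
        constructor <;> field_simp <;> ring
  · have hWF : ε / (8 * (n + 8)) ≠ 0 := div_ne_zero hεne hn8
    have hI : ε / 72 ≠ 0 := by positivity
    have hC : ε / (24 * n) ≠ 0 := div_ne_zero hεne h24n
    have hCv : (n - 4) * ε / (72 * n) ≠ 0 := by
      apply div_ne_zero _ h72n
      exact mul_ne_zero (sub_ne_zero.mpr hn4) hεne
    refine List.Pairwise.cons ?_ (List.Pairwise.cons ?_ (List.Pairwise.cons ?_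
      (List.pairwise_singleton _ _)))
    · intro a ha
      simp only [List.mem_cons, List.mem_singleton, List.not_mem_nil, or_false] at ha
      rcases ha with h | h | h <;> subst h <;> intro he
      · exact hWF (congrArg Prod.fst he).symm
      · exact hI (congrArg Prod.snd he).symm
      · exact hC (congrArg Prod.fst he).symm
    · intro a ha
      simp only [List.mem_cons, List.mem_singleton, List.not_mem_nil, or_false] at ha
      rcases ha with h | h <;> subst h <;> intro he
      · exact hWF (congrArg Prod.fst he)
      · exact hCv (congrArg Prod.snd he).symm
    · intro a ha
      simp only [List.mem_singleton] at ha
      subst ha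
      intro he
      exact hC (congrArg Prod.fst he).symm
end

section
/- For real ε and n > 0, the Jacobian matrix J(u,v) of the O(n) model with cubic anisotropy evaluated at the Cubic fixed point (u, v) = (ε/(24n), (n−4)ε/(72n)) has characteristic polynomial (X + ε)(X + ε(n−4)/(3n)); that is, its eigenvalues are −ε and −ε(n−4)/(3n). -/
open Polynomial in
lemma charpoly_aux (A B D a b : ℝ) (h1 : A + D = -(a + b)) (h2 : A * D - B = a * b) :
    (X - Polynomial.C A) * (X - Polynomial.C D) - Polynomial.C B
      = (X + Polynomial.C a) * (X + Polynomial.C b) := by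
  have e1 : Polynomial.C A + Polynomial.C D = -(Polynomial.C a + Polynomial.C b) := by
    rw [← map_add, ← map_add, ← map_neg, h1]
  have e2 : Polynomial.C A * Polynomial.C D - Polynomial.C B
      = Polynomial.C a * Polynomial.C b := by
    rw [← map_mul, ← map_sub, ← map_mul, h2]
  linear_combination (-X : ℝ[X]) * e1 + e2

/-- The Jacobian matrix of the one-loop beta functions of the `O(n)` model with
cubic anisotropy. -/
def OnCubicJacobian (ε n u v : ℝ) : Matrix (Fin 2) (Fin 2) ℝ :=
  !![ε - 16 * (n + 8) * u - 48 * v, -48 * u;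
     -96 * v, ε - 96 * u - 144 * v]

/-- For real `ε` and `n > 0`, the Jacobian of the `O(n)` model with cubic anisotropy
at the Cubic fixed point `(ε/(24n), (n-4)ε/(72n))` has characteristic polynomial
`(X + ε)(X + ε(n-4)/(3n))`; i.e. its eigenvalues are `-ε` and `-ε(n-4)/(3n)`. -/
theorem cubic_fixed_point_charpoly (ε n : ℝ) (hn : 0 < n) :
    (OnCubicJacobian ε n (ε / (24 * n)) ((n - 4) * ε / (72 * n))).charpoly =
      (Polynomial.X + Polynomial.C ε) *
        (Polynomial.X + Polynomial.C (ε * (n - 4) / (3 * n))) := by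
  have hn' : n ≠ 0 := ne_of_gt hn
  simp only [Matrix.charpoly, Matrix.det_fin_two, Matrix.charmatrix_apply,
    OnCubicJacobian, Matrix.one_apply, Matrix.map_apply, Matrix.cons_val',
    Matrix.cons_val_zero, Matrix.cons_val_one, Matrix.head_cons,
    Matrix.head_fin_const, Matrix.empty_val', Matrix.cons_val_fin_one,
    Matrix.smul_apply, Matrix.diagonal_apply]
  norm_num
  simp only [← map_mul, ← map_add, ← map_sub]
  exact charpoly_aux _ _ _ _ _ (by field_simp; ring) (by field_simp; ring)
end

section
/- For real ε and n > 0, the Jacobian matrix J(u,v) of the O(n) model with cubic anisotropy evaluated at the Wilson–Fisher fixed point (u, v) = (ε/(8(n+8)), 0) is upper triangular with characteristic polynomial (X + ε)(X − ε(n−4)/(n+8)); that is, its eigenvalues are −ε and ε(n−4)/(n+8). -/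
/-- For real `ε` and `n > 0`, the Jacobian of the `O(n)` model with cubic anisotropy
at the Wilson–Fisher fixed point `(ε/(8(n+8)), 0)` is upper triangular with
characteristic polynomial `(X + ε)(X - ε(n-4)/(n+8))`; i.e. its eigenvalues are
`-ε` and `ε(n-4)/(n+8)`. -/
theorem wilson_fisher_fixed_point_charpoly (ε n : ℝ) (hn : 0 < n) :
    (OnCubicJacobian ε n (ε / (8 * (n + 8))) 0) 1 0 = 0 ∧
    (OnCubicJacobian ε n (ε / (8 * (n + 8))) 0).charpoly =
      (Polynomial.X + Polynomial.C ε) *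
        (Polynomial.X - Polynomial.C (ε * (n - 4) / (n + 8))) := by
  have h8 : n + 8 ≠ 0 := by nlinarith
  have hd1 : ε - 16 * (n + 8) * (ε / (8 * (n + 8))) - 48 * 0 = -ε := by
    field_simp; ring
  have hd2 : ε - 96 * (ε / (8 * (n + 8))) - 144 * 0 = ε * (n - 4) / (n + 8) := by
    field_simp; ring
  constructor
  · simp [OnCubicJacobian]
  · rw [Matrix.charpoly]
    rw [Matrix.det_fin_two]
    rw [Matrix.charmatrix_apply_eq, Matrix.charmatrix_apply_eq,
        Matrix.charmatrix_apply_ne _ _ _ (by decide),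
        Matrix.charmatrix_apply_ne _ _ _ (by decide)]
    simp only [OnCubicJacobian, Matrix.of_apply, Matrix.cons_val', Matrix.cons_val_zero,
      Matrix.cons_val_one, Matrix.head_cons, Matrix.empty_val', Matrix.cons_val_fin_one,
      Matrix.head_fin_const]
    rw [hd1, hd2]
    simp only [mul_zero, Polynomial.C_0, neg_zero, zero_mul, mul_comm]
    simp only [map_neg]
    ring
end
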